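/- Every feasible pairing scheme f admits a generalized pairwise valid rate assignment R : Fin n → ℝ with Σ_{i} Q i (R i) = cost(f); specifically, R i = H[X i] whenever f i = root, R i = H[X i | X j] whenever f i = child j, and for each matched pair {i, j} the pair (R i, R j) lies in S i j and attains sInf { Q i a + Q j b : (a, b) ∈ S i j }. -/

import Mathlib

/-!
Roots and children transmit at their prescribed (conditional) entropies, and each matched pair
at a point minimising its sum power over its region, which exists because the power constraints
cut the Slepian–Wolf region down to a compact set. Following parents from any node must reach a
root or a matched node, both initially decodable: an endless chain of children would trace
arbitrarily long non-backtracking walks in the scheme's forest, and in a forest these are paths.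
In the cost, each member of a matched pair contributes half of the pair's total, so summing over
the nodes counts every pair once.
-/

open MeasureTheory ProbabilityTheory

/-- Shannon entropy (in nats) of a random variable. -/
noncomputable def shEntropy {Ω : Type*} [MeasurableSpace Ω] {S : Type*}
    (μ : Measure Ω) (X : Ω → S) : ℝ :=
  ∑' x : S, Real.negMulLog (μ (X ⁻¹' {x})).toReal

/-- Conditional Shannon entropy `H[X | Y]`. -/
noncomputable def shCondEntropy {Ω : Type*} [MeasurableSpace Ω] {S T : Type*}
    (μ : Measure Ω) (X : Ω → S) (Y : Ω → T) : ℝ :=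
  ∑' y : T, (μ (Y ⁻¹' {y})).toReal * shEntropy (ProbabilityTheory.cond μ (Y ⁻¹' {y})) X

/-- The power needed at node `i` (channel gain `γ i`) to support rate `r` (in nats). -/
noncomputable def Qpow {n : ℕ} (γ : Fin n → ℝ) (i : Fin n) (r : ℝ) : ℝ :=
  (Real.exp r - 1) / γ i

/-- The two-dimensional Slepian-Wolf region of the pair of sources `X i`, `X j`. -/
def SWregion {Ω S : Type*} [MeasurableSpace Ω] {n : ℕ}
    (μ : Measure Ω) (X : Fin n → Ω → S) (i j : Fin n) : Set (ℝ × ℝ) :=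
  {q : ℝ × ℝ | q.1 ≥ shCondEntropy μ (X i) (X j) ∧ q.2 ≥ shCondEntropy μ (X j) (X i) ∧
    q.1 + q.2 ≥ shEntropy μ (fun ω => (X i ω, X j ω))}

/-- The Slepian-Wolf region intersected with the peak power constraints. -/
def Sregion {Ω S : Type*} [MeasurableSpace Ω] {n : ℕ}
    (μ : Measure Ω) (X : Fin n → Ω → S) (γ : Fin n → ℝ) (Pmax : ℝ)
    (i j : Fin n) : Set (ℝ × ℝ) :=
  {q : ℝ × ℝ | q ∈ SWregion μ X i j ∧ Qpow γ i q.1 ≤ Pmax ∧ Qpow γ j q.2 ≤ Pmax}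

/-- `X i` is initially decodable under `R` if `R i ≥ H[X i]`, or together with some
other source `X j` the rate pair `(R i, R j)` lies in their Slepian-Wolf region. -/
def InitiallyDecodable {Ω S : Type*} [MeasurableSpace Ω] {n : ℕ}
    (μ : Measure Ω) (X : Fin n → Ω → S) (R : Fin n → ℝ) (i : Fin n) : Prop :=
  R i ≥ shEntropy μ (X i) ∨ ∃ j : Fin n, j ≠ i ∧ (R i, R j) ∈ SWregion μ X i j

/-- The generalized pairwise property: each source is initially decodable, or is
decodable via a chain of sources starting from an initially decodable one. -/
def GenPairwiseProperty {Ω S : Type*} [MeasurableSpace Ω] {n : ℕ}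
    (μ : Measure Ω) (X : Fin n → Ω → S) (R : Fin n → ℝ) : Prop :=
  ∀ i : Fin n, InitiallyDecodable μ X R i ∨
    ∃ (k : ℕ) (s : ℕ → Fin n), 1 ≤ k ∧
      InitiallyDecodable μ X R (s 1) ∧
      (∀ j : ℕ, 2 ≤ j → j ≤ k → R (s j) ≥ shCondEntropy μ (X (s j)) (X (s (j - 1)))) ∧
      R i ≥ shCondEntropy μ (X i) (X (s k))

/-- A rate assignment is generalized pairwise valid if it satisfies the generalized
pairwise property and every node meets the peak power constraint. -/
def GenPairwiseValid {Ω S : Type*} [MeasurableSpace Ω] {n : ℕ}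
    (μ : Measure Ω) (X : Fin n → Ω → S) (γ : Fin n → ℝ) (Pmax : ℝ)
    (R : Fin n → ℝ) : Prop :=
  GenPairwiseProperty μ X R ∧ ∀ i : Fin n, Qpow γ i (R i) ≤ Pmax

/-- The decoding relation of a rate assignment: `a` can help decode `b` if
`H[X b | X a] ≤ R b`. -/
def decRel {Ω S : Type*} [MeasurableSpace Ω] {n : ℕ}
    (μ : Measure Ω) (X : Fin n → Ω → S) (R : Fin n → ℝ) : Fin n → Fin n → Prop :=
  fun a b => shCondEntropy μ (X b) (X a) ≤ R b

/-- The mode of a node in a pairing scheme: a root (transmitting at full entropy),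
a child of some node `j` (transmitting at conditional entropy given `X j`), or
matched with some node `j` (jointly decoded with `X j`). -/
inductive PairMode (n : ℕ) where
  | root : PairMode n
  | child (j : Fin n) : PairMode n
  | matched (j : Fin n) : PairMode n
deriving DecidableEq

/-- A pairing scheme: each node is a root, a child of another node, or matched with
another node; matching is symmetric, no two nodes are children of each other, and the
associated undirected graph is acyclic. -/
structure PairingScheme (n : ℕ) where
  mode : Fin n → PairMode n
  child_ne : ∀ i j : Fin n, mode i = PairMode.child j → j ≠ i
  matched_ne : ∀ i j : Fin n, mode i = PairMode.matched j → j ≠ i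
  matched_symm : ∀ i j : Fin n, mode i = PairMode.matched j ↔ mode j = PairMode.matched i
  no_mutual_child : ∀ i j : Fin n, i ≠ j →
    ¬(mode i = PairMode.child j ∧ mode j = PairMode.child i)
  acyclic : (SimpleGraph.fromRel fun i j =>
    mode i = PairMode.matched j ∨ mode i = PairMode.child j ∨
      mode j = PairMode.child i).IsAcyclic

/-- A pairing scheme is feasible if all the prescribed transmissions can be realized
within the peak power constraint. -/
def PairingScheme.Feasible {Ω S : Type*} [MeasurableSpace Ω] {n : ℕ}
    (f : PairingScheme n) (μ : Measure Ω) (X : Fin n → Ω → S) (γ : Fin n → ℝ)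
    (Pmax : ℝ) : Prop :=
  (∀ i : Fin n, f.mode i = PairMode.root → Qpow γ i (shEntropy μ (X i)) ≤ Pmax) ∧
  (∀ i j : Fin n, f.mode i = PairMode.child j →
    Qpow γ i (shCondEntropy μ (X i) (X j)) ≤ Pmax) ∧
  (∀ i j : Fin n, f.mode i = PairMode.matched j →
    (Sregion μ X γ Pmax i j).Nonempty)

/-- The minimum sum power of a jointly decoded pair `(i, j)`. -/
noncomputable def pairPower {Ω S : Type*} [MeasurableSpace Ω] {n : ℕ}
    (μ : Measure Ω) (X : Fin n → Ω → S) (γ : Fin n → ℝ) (Pmax : ℝ)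
    (i j : Fin n) : ℝ :=
  sInf {x : ℝ | ∃ a b : ℝ, (a, b) ∈ Sregion μ X γ Pmax i j ∧ x = Qpow γ i a + Qpow γ j b}

/-- The power contribution of node `i` in a pairing scheme; each member of a matched
pair contributes half of the pair power, so that the pair is counted once in total. -/
noncomputable def schemeContrib {Ω S : Type*} [MeasurableSpace Ω] {n : ℕ}
    (μ : Measure Ω) (X : Fin n → Ω → S) (γ : Fin n → ℝ) (Pmax : ℝ)
    (f : PairingScheme n) (i : Fin n) : ℝ :=
  match f.mode i with
  | PairMode.root => Qpow γ i (shEntropy μ (X i))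
  | PairMode.child j => Qpow γ i (shCondEntropy μ (X i) (X j))
  | PairMode.matched j => (1 / 2) * pairPower μ X γ Pmax i j

/-- The total cost (sum power) of a feasible pairing scheme: roots contribute the power
of their entropy, children the power of their conditional entropy, and each matched
pair (counted once) its minimum sum power. -/
noncomputable def schemeCost {Ω S : Type*} [MeasurableSpace Ω] {n : ℕ}
    (μ : Measure Ω) (X : Fin n → Ω → S) (γ : Fin n → ℝ) (Pmax : ℝ)
    (f : PairingScheme n) : ℝ :=
  ∑ i : Fin n, schemeContrib μ X γ Pmax f i

namespace SimpleGraph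

variable {V : Type*} {G : SimpleGraph V} {p : V → V} {C : Set V}

def iterateWalk (hadj : ∀ y ∈ C, G.Adj y (p y)) (hmaps : ∀ y ∈ C, p y ∈ C) :
    (k : ℕ) → (x : V) → x ∈ C → G.Walk x (p^[k] x)
  | 0, _, _ => .nil
  | k + 1, x, hx => .cons (hadj x hx) (iterateWalk hadj hmaps k (p x) (hmaps x hx))

section
variable (hadj : ∀ y ∈ C, G.Adj y (p y)) (hmaps : ∀ y ∈ C, p y ∈ C)

theorem edges_iterateWalk_succ (k : ℕ) (x : V) (hx : x ∈ C) :
    (iterateWalk hadj hmaps (k + 1) x hx).edges =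
      s(x, p x) :: (iterateWalk hadj hmaps k (p x) (hmaps x hx)).edges :=
  rfl

theorem length_iterateWalk (k : ℕ) (x : V) (hx : x ∈ C) :
    (iterateWalk hadj hmaps k x hx).length = k := by
  induction k generalizing x with
  | zero => rfl
  | succ k ih => rw [← Walk.length_edges, edges_iterateWalk_succ, List.length_cons,
      Walk.length_edges, ih]

theorem isChain_ne_edges_iterateWalk (hback : ∀ y ∈ C, p (p y) ≠ y) (k : ℕ) (x : V)
    (hx : x ∈ C) : (iterateWalk hadj hmaps k x hx).edges.IsChain (· ≠ ·) := by
  induction k generalizing x with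
  | zero => exact List.IsChain.nil
  | succ k ih =>
    rw [edges_iterateWalk_succ]
    refine List.isChain_cons.mpr ⟨?_, ih (p x) (hmaps x hx)⟩
    cases k with
    | zero => simp [iterateWalk]
    | succ k =>
      rw [edges_iterateWalk_succ]
      simp only [List.head?_cons, Option.mem_some_iff, forall_eq', ne_eq, Sym2.eq_iff, not_or,
        not_and]
      exact ⟨fun hx' => absurd hx' (hadj x hx).ne, fun hx' => absurd hx'.symm (hback x hx)⟩

end

/-- Otherwise an orbit would trace non-backtracking walks, hence paths, of every length. -/
theorem IsAcyclic.eq_empty_of_forall_adj_of_mapsTo [Fintype V] (hG : G.IsAcyclic)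
    (hadj : ∀ y ∈ C, G.Adj y (p y)) (hmaps : ∀ y ∈ C, p y ∈ C)
    (hback : ∀ y ∈ C, p (p y) ≠ y) : C = ∅ := by
  refine Set.eq_empty_of_forall_notMem fun x hx => ?_
  have hpath := (hG.isPath_iff_isChain _).mpr
    (isChain_ne_edges_iterateWalk hadj hmaps hback (Fintype.card V) x hx)
  simpa [length_iterateWalk] using hpath.length_lt

end SimpleGraph

section Regions

variable {Ω S : Type*} [MeasurableSpace Ω] {n : ℕ} (μ : Measure Ω) (X : Fin n → Ω → S)
  (γ : Fin n → ℝ) (Pmax : ℝ)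

theorem shEntropy_equiv_comp {T : Type*} (e : S ≃ T) (Y : Ω → S) :
    shEntropy μ (e ∘ Y) = shEntropy μ Y := by
  unfold shEntropy
  rw [← e.tsum_eq]
  refine tsum_congr fun s => ?_
  rw [show (e ∘ Y) ⁻¹' {e s} = Y ⁻¹' {s} by ext; simp]

theorem shEntropy_prod_comm {T U : Type*} (Y : Ω → T) (Z : Ω → U) :
    shEntropy μ (fun ω => (Z ω, Y ω)) = shEntropy μ (fun ω => (Y ω, Z ω)) :=
  shEntropy_equiv_comp μ (Equiv.prodComm T U) fun ω => (Y ω, Z ω)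

theorem swap_mem_SWregion {i j : Fin n} {q : ℝ × ℝ} (h : q ∈ SWregion μ X i j) :
    q.swap ∈ SWregion μ X j i := by
  obtain ⟨h₁, h₂, h₃⟩ := h
  refine ⟨h₂, h₁, ?_⟩
  rw [shEntropy_prod_comm, Prod.fst_swap, Prod.snd_swap, add_comm]
  exact h₃

theorem swap_mem_Sregion {i j : Fin n} {q : ℝ × ℝ} (h : q ∈ Sregion μ X γ Pmax i j) :
    q.swap ∈ Sregion μ X γ Pmax j i :=
  ⟨swap_mem_SWregion μ X h.1, h.2.2, h.2.1⟩

theorem pairPower_comm (i j : Fin n) : pairPower μ X γ Pmax i j = pairPower μ X γ Pmax j i := by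
  unfold pairPower
  congr 1
  ext x
  constructor <;> rintro ⟨a, b, hab, rfl⟩
  exacts [⟨b, a, swap_mem_Sregion μ X γ Pmax hab, add_comm _ _⟩,
    ⟨b, a, swap_mem_Sregion μ X γ Pmax hab, add_comm _ _⟩]

theorem continuous_Qpow (i : Fin n) : Continuous (Qpow γ i) := by
  unfold Qpow
  fun_prop

theorem le_log_of_Qpow_le {i : Fin n} (hγ : 0 < γ i) {r : ℝ} (h : Qpow γ i r ≤ Pmax) :
    r ≤ Real.log (γ i * Pmax + 1) := by
  have hexp : Real.exp r ≤ γ i * Pmax + 1 := by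
    rw [Qpow, div_le_iff₀ hγ] at h
    linarith
  exact (Real.le_log_iff_exp_le ((Real.exp_pos r).trans_le hexp)).mpr hexp

theorem isCompact_Sregion {i j : Fin n} (hγi : 0 < γ i) (hγj : 0 < γ j) :
    IsCompact (Sregion μ X γ Pmax i j) := by
  have hclosed : IsClosed (Sregion μ X γ Pmax i j) := by
    simp only [Sregion, SWregion, ge_iff_le, Set.ofPred_and, Set.ofPred_mem_eq]
    exact ((isClosed_le continuous_const continuous_fst).inter
      ((isClosed_le continuous_const continuous_snd).inter
      (isClosed_le continuous_const (continuous_fst.add continuous_snd)))).inter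
      ((isClosed_le ((continuous_Qpow γ i).comp continuous_fst) continuous_const).inter
      (isClosed_le ((continuous_Qpow γ j).comp continuous_snd) continuous_const))
  have hbox : Sregion μ X γ Pmax i j ⊆
      Set.Icc (shCondEntropy μ (X i) (X j)) (Real.log (γ i * Pmax + 1)) ×ˢ
        Set.Icc (shCondEntropy μ (X j) (X i)) (Real.log (γ j * Pmax + 1)) := by
    rintro ⟨a, b⟩ ⟨⟨ha, hb, -⟩, hQa, hQb⟩
    exact ⟨⟨ha, le_log_of_Qpow_le γ Pmax hγi hQa⟩,
      ⟨hb, le_log_of_Qpow_le γ Pmax hγj hQb⟩⟩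
  exact (isCompact_Icc.prod isCompact_Icc).of_isClosed_subset hclosed hbox

def IsPairOptimal (i j : Fin n) (q : ℝ × ℝ) : Prop :=
  q ∈ Sregion μ X γ Pmax i j ∧ Qpow γ i q.1 + Qpow γ j q.2 = pairPower μ X γ Pmax i j

theorem IsPairOptimal.swap {i j : Fin n} {q : ℝ × ℝ} (h : IsPairOptimal μ X γ Pmax i j q) :
    IsPairOptimal μ X γ Pmax j i q.swap :=
  ⟨swap_mem_Sregion μ X γ Pmax h.1, by
    rw [pairPower_comm, ← h.2, Prod.fst_swap, Prod.snd_swap, add_comm]⟩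

theorem exists_isPairOptimal {i j : Fin n} (hγi : 0 < γ i) (hγj : 0 < γ j)
    (hne : (Sregion μ X γ Pmax i j).Nonempty) : ∃ q, IsPairOptimal μ X γ Pmax i j q := by
  set F : ℝ × ℝ → ℝ := fun q => Qpow γ i q.1 + Qpow γ j q.2
  have himage : {x : ℝ | ∃ a b : ℝ, (a, b) ∈ Sregion μ X γ Pmax i j ∧ x = F (a, b)} =
      F '' Sregion μ X γ Pmax i j := by
    ext x
    constructor
    · rintro ⟨a, b, hab, rfl⟩; exact ⟨(a, b), hab, rfl⟩
    · rintro ⟨⟨a, b⟩, hab, rfl⟩; exact ⟨a, b, hab, rfl⟩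
  have hF : Continuous F :=
    ((continuous_Qpow γ i).comp continuous_fst).add ((continuous_Qpow γ j).comp continuous_snd)
  obtain ⟨q, hq, hFq⟩ :=
    ((isCompact_Sregion μ X γ Pmax hγi hγj).image hF).sInf_mem (hne.image F)
  exact ⟨q, hq, by rw [pairPower, himage]; exact hFq⟩

end Regions

section Decoding

variable {Ω S : Type*} [MeasurableSpace Ω] {n : ℕ} {μ : Measure Ω} {X : Fin n → Ω → S}
  {R : Fin n → ℝ}

/-- The chain `s 1, …, s k` is the orbit `pᵏ i, …, p i` read backwards, with `k` minimal. -/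
theorem genPairwiseProperty_of_iterate (p : Fin n → Fin n)
    (hstep : ∀ i, ¬InitiallyDecodable μ X R i → decRel μ X R (p i) i)
    (hreach : ∀ i, ∃ k, InitiallyDecodable μ X R (p^[k] i)) : GenPairwiseProperty μ X R := by
  classical
  intro i
  by_cases hi : InitiallyDecodable μ X R i
  · exact Or.inl hi
  right
  set k := Nat.find (hreach i)
  have hk : InitiallyDecodable μ X R (p^[k] i) := Nat.find_spec (hreach i)
  have hbefore : ∀ m < k, ¬InitiallyDecodable μ X R (p^[m] i) :=
    fun _ => Nat.find_min (hreach i)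
  have hk_pos : 1 ≤ k := Nat.one_le_iff_ne_zero.mpr fun h0 => hi (by simpa [h0] using hk)
  refine ⟨k, fun j => p^[k + 1 - j] i, hk_pos, by simpa using hk, fun j hj2 hjk => ?_, ?_⟩
  · show decRel μ X R (p^[k + 1 - (j - 1)] i) (p^[k + 1 - j] i)
    rw [show k + 1 - (j - 1) = k + 1 - j + 1 by omega, Function.iterate_succ_apply']
    exact hstep _ (hbefore _ (by omega))
  · show decRel μ X R (p^[k + 1 - k] i) i
    rw [Nat.add_sub_cancel_left, Function.iterate_one]
    exact hstep i hi

end Decoding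

namespace PairingScheme

variable {n : ℕ} (f : PairingScheme n)

def parent (i : Fin n) : Fin n :=
  match f.mode i with
  | .child j => j
  | _ => i

def partner (i : Fin n) : Fin n :=
  match f.mode i with
  | .matched j => j
  | _ => i

theorem parent_of_child {i j : Fin n} (h : f.mode i = .child j) : f.parent i = j := by
  simp [parent, h]

theorem partner_of_matched {i j : Fin n} (h : f.mode i = .matched j) : f.partner i = j := by
  simp [partner, h]

theorem partner_of_not_matched {i : Fin n} (h : ∀ j, f.mode i ≠ .matched j) :
    f.partner i = i := by
  unfold partner
  split
  · exact absurd ‹_› (h _)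
  · rfl

theorem partner_involutive : Function.Involutive f.partner := by
  intro i
  by_cases h : ∃ j, f.mode i = .matched j
  · obtain ⟨j, hj⟩ := h
    rw [f.partner_of_matched hj, f.partner_of_matched ((f.matched_symm i j).mp hj)]
  · rw [not_exists] at h
    rw [f.partner_of_not_matched h, f.partner_of_not_matched h]

theorem exists_iterate_parent_not_child (i : Fin n) :
    ∃ k, ∀ j, f.mode (f.parent^[k] i) ≠ .child j := by
  set C : Set (Fin n) := {x | ∀ k, ∃ j, f.mode (f.parent^[k] x) = .child j}
  have hchild : ∀ x ∈ C, f.mode x = .child (f.parent x) := fun x hx => by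
    obtain ⟨j, hj⟩ := hx 0
    rw [Function.iterate_zero_apply] at hj
    rw [hj, f.parent_of_child hj]
  have hC : C = ∅ := by
    refine f.acyclic.eq_empty_of_forall_adj_of_mapsTo (fun x hx => ?_) (fun x hx k => hx (k + 1))
      (fun x hx hback => ?_)
    · rw [SimpleGraph.fromRel_adj]
      exact ⟨(f.child_ne _ _ (hchild x hx)).symm, Or.inl (Or.inr (Or.inl (hchild x hx)))⟩
    · have hpx := hchild _ fun k => hx (k + 1)
      rw [hback] at hpx
      exact f.no_mutual_child x (f.parent x) (f.child_ne _ _ (hchild x hx)).symm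
        ⟨hchild x hx, hpx⟩
  have hi : i ∉ C := hC ▸ Set.notMem_empty i
  simpa [C] using hi

section Rates

variable {Ω S : Type*} [MeasurableSpace Ω] (μ : Measure Ω) (X : Fin n → Ω → S)
  (γ : Fin n → ℝ) (Pmax : ℝ)

structure IsOptimalRate (R : Fin n → ℝ) : Prop where
  root : ∀ i, f.mode i = .root → R i = shEntropy μ (X i)
  child : ∀ i j, f.mode i = .child j → R i = shCondEntropy μ (X i) (X j)
  matched : ∀ i j, f.mode i = .matched j → IsPairOptimal μ X γ Pmax i j (R i, R j)

variable {μ X γ Pmax f}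

theorem exists_isOptimalRate (hγ : ∀ i, 0 < γ i) (hf : f.Feasible μ X γ Pmax) :
    ∃ R, f.IsOptimalRate μ X γ Pmax R := by
  classical
  have hopt : ∀ i j, ∃ q, f.mode i = .matched j → IsPairOptimal μ X γ Pmax i j q := by
    intro i j
    by_cases h : f.mode i = .matched j
    · obtain ⟨q, hq⟩ := exists_isPairOptimal μ X γ Pmax (hγ i) (hγ j) (hf.2.2 i j h)
      exact ⟨q, fun _ => hq⟩
    · exact ⟨0, fun h' => absurd h' h⟩
  choose q hq using hopt
  -- each matched pair shares one minimiser, read off in the orientation of its smaller index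
  refine ⟨fun i => match f.mode i with
    | .root => shEntropy μ (X i)
    | .child j => shCondEntropy μ (X i) (X j)
    | .matched j => if i < j then (q i j).1 else (q j i).2,
    ⟨fun i h => by simp [h], fun i j h => by simp [h], fun i j h => ?_⟩⟩
  have h' := (f.matched_symm i j).mp h
  rcases lt_or_gt_of_ne (f.matched_ne i j h).symm with hij | hji
  · simpa [h, h', hij, hij.not_gt] using hq i j h
  · convert (hq j i h').swap using 2 <;> simp [h, h', hji, hji.not_gt]

theorem IsOptimalRate.initiallyDecodable {R : Fin n → ℝ} (hR : f.IsOptimalRate μ X γ Pmax R)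
    {i : Fin n} (h : ∀ j, f.mode i ≠ .child j) : InitiallyDecodable μ X R i := by
  cases hm : f.mode i with
  | root => exact Or.inl (hR.root i hm).ge
  | child j => exact absurd hm (h j)
  | matched j => exact Or.inr ⟨j, f.matched_ne i j hm, (hR.matched i j hm).1.1⟩

theorem IsOptimalRate.genPairwiseValid {R : Fin n → ℝ} (hf : f.Feasible μ X γ Pmax)
    (hR : f.IsOptimalRate μ X γ Pmax R) : GenPairwiseValid μ X γ Pmax R := by
  refine ⟨genPairwiseProperty_of_iterate f.parent (fun i hi => ?_) (fun i => ?_), fun i => ?_⟩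
  · obtain ⟨j, hj⟩ : ∃ j, f.mode i = .child j := by
      by_contra! h
      exact hi (hR.initiallyDecodable h)
    rw [decRel, f.parent_of_child hj, hR.child i j hj]
  · obtain ⟨k, hk⟩ := f.exists_iterate_parent_not_child i
    exact ⟨k, hR.initiallyDecodable hk⟩
  · cases hm : f.mode i with
    | root => rw [hR.root i hm]; exact hf.1 i hm
    | child j => rw [hR.child i j hm]; exact hf.2.1 i j hm
    | matched j => exact (hR.matched i j hm).1.2.1

theorem IsOptimalRate.schemeContrib_eq {R : Fin n → ℝ} (hR : f.IsOptimalRate μ X γ Pmax R)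
    (i : Fin n) : schemeContrib μ X γ Pmax f i =
      (Qpow γ i (R i) + Qpow γ (f.partner i) (R (f.partner i))) / 2 := by
  cases hm : f.mode i with
  | root =>
    rw [f.partner_of_not_matched (by simp [hm]), hR.root i hm]
    simp [schemeContrib, hm]
  | child j =>
    rw [f.partner_of_not_matched (by simp [hm]), hR.child i j hm]
    simp [schemeContrib, hm]
  | matched j =>
    rw [f.partner_of_matched hm, (hR.matched i j hm).2]
    simp [schemeContrib, hm, div_eq_inv_mul]

theorem IsOptimalRate.sum_Qpow_eq_schemeCost {R : Fin n → ℝ}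
    (hR : f.IsOptimalRate μ X γ Pmax R) :
    ∑ i, Qpow γ i (R i) = schemeCost μ X γ Pmax f := by
  have hperm : ∑ i, Qpow γ (f.partner i) (R (f.partner i)) = ∑ i, Qpow γ i (R i) :=
    Equiv.sum_comp (f.partner_involutive.toPerm _) fun i => Qpow γ i (R i)
  simp only [schemeCost, hR.schemeContrib_eq, ← Finset.sum_div, Finset.sum_add_distrib, hperm]
  ring

end Rates

end PairingScheme

theorem feasible_scheme_admits_valid_rates_general
    {Ω S : Type*} [MeasurableSpace Ω]
    (μ : Measure Ω) {n : ℕ}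
    (X : Fin n → Ω → S)
    (γ : Fin n → ℝ) (hγ : ∀ i, 0 < γ i) (Pmax : ℝ)
    (f : PairingScheme n) (hf : f.Feasible μ X γ Pmax) :
    ∃ R : Fin n → ℝ, GenPairwiseValid μ X γ Pmax R ∧
      (∑ i : Fin n, Qpow γ i (R i)) = schemeCost μ X γ Pmax f ∧
      (∀ i : Fin n, f.mode i = PairMode.root → R i = shEntropy μ (X i)) ∧
      (∀ i j : Fin n, f.mode i = PairMode.child j → R i = shCondEntropy μ (X i) (X j)) ∧
      (∀ i j : Fin n, f.mode i = PairMode.matched j →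
        (R i, R j) ∈ Sregion μ X γ Pmax i j ∧
        Qpow γ i (R i) + Qpow γ j (R j) = pairPower μ X γ Pmax i j) := by
  obtain ⟨R, hR⟩ := f.exists_isOptimalRate hγ hf
  exact ⟨R, hR.genPairwiseValid hf, hR.sum_Qpow_eq_schemeCost, hR.root, hR.child, hR.matched⟩

/-- Every feasible pairing scheme admits a generalized pairwise valid rate assignment
whose sum power equals the cost of the scheme, with roots at their entropies, children
at their conditional entropies, and matched pairs attaining their minimum sum power. -/
theorem feasible_scheme_admits_valid_rates
    {Ω S : Type*} [MeasurableSpace Ω] [MeasurableSpace S] [MeasurableSingletonClass S]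
    (μ : Measure Ω) [IsProbabilityMeasure μ] {n : ℕ} (hn : 1 ≤ n)
    (X : Fin n → Ω → S) (hX : ∀ i, Measurable (X i))
    (hfin : ∀ i, (Set.range (X i)).Finite)
    (γ : Fin n → ℝ) (hγ : ∀ i, 0 < γ i) (Pmax : ℝ) (hP : 0 < Pmax)
    (f : PairingScheme n) (hf : f.Feasible μ X γ Pmax) :
    ∃ R : Fin n → ℝ, GenPairwiseValid μ X γ Pmax R ∧
      (∑ i : Fin n, Qpow γ i (R i)) = schemeCost μ X γ Pmax f ∧
      (∀ i : Fin n, f.mode i = PairMode.root → R i = shEntropy μ (X i)) ∧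
      (∀ i j : Fin n, f.mode i = PairMode.child j → R i = shCondEntropy μ (X i) (X j)) ∧
      (∀ i j : Fin n, f.mode i = PairMode.matched j →
        (R i, R j) ∈ Sregion μ X γ Pmax i j ∧
        Qpow γ i (R i) + Qpow γ j (R j) = pairPower μ X γ Pmax i j) :=
  feasible_scheme_admits_valid_rates_general μ X γ hγ Pmax f hf
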